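/- arXiv:0804.0834 — 4 statements merged into one kernel-verified Lean document; each statement's English description precedes it below -/
import Mathlib

section
/- For any positive integers n and a (not necessarily coprime), n divides ∑_{d∣n} μ(d) · a^{n/d}. (Gauss' divisibility theorem.) -/
open ArithmeticFunction Finset

private lemma fermat_int (p : ℕ) (hp : p.Prime) (c : ℤ) : (p : ℤ) ∣ c ^ p - c := by
  haveI := Fact.mk hp
  have h : ((c ^ p - c : ℤ) : ZMod p) = 0 := by
    push_cast
    rw [ZMod.pow_card]
    ring
  exact (ZMod.intCast_zmod_eq_zero_iff_dvd _ _).mp h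

private lemma key_pow (p : ℕ) (hp : p.Prime) (k : ℕ) (c : ℤ) :
    (p : ℤ) ^ (k + 1) ∣ c ^ p ^ (k + 1) - c ^ p ^ k := by
  have h := dvd_sub_pow_of_dvd_sub (fermat_int p hp c) k
  have h1 : (c ^ p) ^ p ^ k = c ^ p ^ (k + 1) := by
    rw [← pow_mul, pow_succ']
  rwa [h1] at h

private lemma ppow_dvd (n a : ℕ) (hn : 0 < n) (p : ℕ) (hp : p.Prime) :
    (p : ℤ) ^ (n.factorization p) ∣
      ∑ d ∈ n.divisors, (moebius d : ℤ) * (a : ℤ) ^ (n / d) := by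
  set k := n.factorization p with hk
  clear_value k
  rcases Nat.eq_zero_or_pos k with hk0 | hkpos
  · rw [hk0, pow_zero]; exact one_dvd _
  obtain ⟨k', rfl⟩ : ∃ k', k = k' + 1 := ⟨k - 1, (Nat.succ_pred_eq_of_pos hkpos).symm⟩
  set m := n / p ^ (k' + 1) with hm
  have hnn : n ≠ 0 := hn.ne'
  have hpk_dvd : p ^ (k' + 1) ∣ n := by rw [hk]; exact Nat.ordProj_dvd n p
  have hnm : n = p ^ (k' + 1) * m := by
    rw [hm, Nat.mul_div_cancel' hpk_dvd]
  have hpm : ¬ p ∣ m := by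
    rw [hm, hk]
    exact Nat.not_dvd_ordCompl hp hnn
  have hm0 : m ≠ 0 := by
    intro h; rw [h, mul_zero] at hnm; exact hnn hnm
  -- split the sum
  rw [← Finset.sum_filter_add_sum_filter_not n.divisors (fun d => p ∣ d)]
  have h1 : n.divisors.filter (fun d => ¬ p ∣ d) = m.divisors := by
    ext d
    simp only [Finset.mem_filter, Nat.mem_divisors]
    constructor
    · rintro ⟨⟨hd, _⟩, hpd⟩
      refine ⟨?_, hm0⟩
      have hcop : Nat.Coprime d (p ^ (k' + 1)) :=
        Nat.Coprime.pow_right _ ((hp.coprime_iff_not_dvd.mpr hpd).symm)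
      rw [hnm] at hd
      exact (Nat.Coprime.dvd_of_dvd_mul_left hcop hd)
    · rintro ⟨hd, _⟩
      exact ⟨⟨hd.trans ⟨p ^ (k' + 1), by rw [hnm]; ring⟩, hnn⟩,
        fun hpd => hpm (hpd.trans hd)⟩
  -- the p ∣ d part: split by p*p ∣ d
  rw [← Finset.sum_filter_add_sum_filter_not (n.divisors.filter (fun d => p ∣ d))
      (fun d => p * p ∣ d)]
  have h2 : ∑ d ∈ (n.divisors.filter (fun d => p ∣ d)).filter (fun d => p * p ∣ d),
      (moebius d : ℤ) * (a : ℤ) ^ (n / d) = 0 := by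
    apply Finset.sum_eq_zero
    intro d hd
    simp only [Finset.mem_filter] at hd
    have hsq : ¬ Squarefree d := fun hsf => hp.not_isUnit (hsf p hd.2)
    rw [moebius_eq_zero_of_not_squarefree hsq]
    simp
  have h3 : (n.divisors.filter (fun d => p ∣ d)).filter (fun d => ¬ p * p ∣ d)
      = m.divisors.image (fun e => p * e) := by
    ext d
    simp only [Finset.mem_filter, Nat.mem_divisors, Finset.mem_image]
    constructor
    · rintro ⟨⟨⟨hdn, _⟩, hpd⟩, hp2d⟩
      obtain ⟨e, rfl⟩ := hpd
      refine ⟨e, ⟨?_, hm0⟩, rfl⟩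
      have hpe : ¬ p ∣ e := fun h => hp2d (mul_dvd_mul_left p h)
      have hcop : Nat.Coprime e (p ^ (k' + 1)) :=
        Nat.Coprime.pow_right _ ((hp.coprime_iff_not_dvd.mpr hpe).symm)
      rw [hnm] at hdn
      exact Nat.Coprime.dvd_of_dvd_mul_left hcop (dvd_of_mul_left_dvd hdn)
    · rintro ⟨e, ⟨he, _⟩, rfl⟩
      have hpe : ¬ p ∣ e := fun h => hpm (h.trans he)
      refine ⟨⟨⟨?_, hnn⟩, ⟨e, rfl⟩⟩, ?_⟩
      · rw [hnm, pow_succ', mul_assoc]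
        exact mul_dvd_mul_left p (Dvd.dvd.mul_left he _)
      · intro h
        exact hpe ((mul_dvd_mul_iff_left (Nat.Prime.ne_zero hp)).mp h)
    
  rw [h1, h2, h3, zero_add, Finset.sum_image (by
    intro x _ y _ h
    exact (Nat.eq_of_mul_eq_mul_left hp.pos h))]
  rw [← Finset.sum_add_distrib]
  apply Finset.dvd_sum
  intro e he
  rw [Nat.mem_divisors] at he
  obtain ⟨hem, _⟩ := he
  have hpe : ¬ p ∣ e := fun h => hpm (h.trans hem)
  have hcop : Nat.Coprime p e := hp.coprime_iff_not_dvd.mpr hpe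
  have hmu : (moebius (p * e) : ℤ) = - (moebius e : ℤ) := by
    rw [isMultiplicative_moebius.map_mul_of_coprime hcop, moebius_apply_prime hp]
    push_cast; ring
  have hne : n / e = p ^ (k' + 1) * (m / e) := by
    rw [hnm, Nat.mul_div_assoc _ hem]
  have hnpe : n / (p * e) = p ^ k' * (m / e) := by
    rw [hnm, pow_succ', mul_assoc, Nat.mul_div_mul_left _ _ hp.pos,
      Nat.mul_div_assoc _ hem]
  rw [hmu, hne, hnpe, mul_comm (p ^ k') (m / e), mul_comm (p ^ (k' + 1)) (m / e),
    pow_mul, pow_mul]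
  have h' : -(moebius e : ℤ) * ((a : ℤ) ^ (m / e)) ^ p ^ k' +
      (moebius e : ℤ) * ((a : ℤ) ^ (m / e)) ^ p ^ (k' + 1) =
      (moebius e : ℤ) * (((a : ℤ) ^ (m / e)) ^ p ^ (k' + 1)
        - ((a : ℤ) ^ (m / e)) ^ p ^ k') := by ring
  rw [h']
  exact Dvd.dvd.mul_left (key_pow p hp k' _) _

/-- Gauss' divisibility theorem: `n ∣ ∑_{d∣n} μ(d) a^{n/d}`. -/
theorem gauss_divisibility (n a : ℕ) (hn : 0 < n) (ha : 0 < a) :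
    (n : ℤ) ∣ ∑ d ∈ n.divisors, (moebius d : ℤ) * (a : ℤ) ^ (n / d) := by
  have hfact : ∏ p ∈ n.primeFactors, p ^ (n.factorization p) = n := by
    conv_rhs => rw [← Nat.factorization_prod_pow_eq_self hn.ne']
    exact (Nat.prod_factorization_eq_prod_primeFactors (· ^ ·)).symm
  have : (n : ℤ) = ∏ p ∈ n.primeFactors, (p : ℤ) ^ (n.factorization p) := by
    conv_lhs => rw [← hfact]
    push_cast
    rfl
  rw [this]
  apply Finset.prod_dvd_of_coprime
  · intro x hx y hy hxy
    simp only [Function.onFun]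
    have hpx := Nat.prime_of_mem_primeFactors hx
    have hpy := Nat.prime_of_mem_primeFactors hy
    have : Nat.Coprime (x ^ n.factorization x) (y ^ n.factorization y) :=
      Nat.Coprime.pow _ _ ((Nat.coprime_primes hpx hpy).mpr hxy)
    have := Nat.isCoprime_iff_coprime.mpr this
    push_cast at this
    exact this
  · intro p hp
    exact ppow_dvd n a hn p (Nat.prime_of_mem_primeFactors hp)
end

section
/- Let p be a prime and a a positive integer with p ∤ a. Then the polynomial ∏_{j=1}^{p−1} [a]_{q^j} = ∏_{j=1}^{p−1} (1 + q^j + q^{2j} + ⋯ + q^{(a−1)j}) is congruent to 1 modulo [p]_q = 1 + q + ⋯ + q^{p−1} in the polynomial ring ℤ[q]. (q-analogue of Fermat's little theorem.) -/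
open Polynomial Finset

/-!
Since `[p]_q` is the cyclotomic polynomial `Φ_p`, the minimal polynomial of a primitive `p`-th
root of unity `ζ`, it suffices to show that the product evaluates to `1` at `ζ`. There
`(ζ^j - 1) [a]_{ζ^j} = (ζ^a)^j - 1`, and as `ζ^a` is again a primitive `p`-th root of unity,
`∏_{j=1}^{p-1} ((ζ^a)^j - 1)` and `∏_{j=1}^{p-1} (ζ^j - 1)` both equal `(-1)^(p-1) p ≠ 0`.
-/

theorem Finset.prod_Icc_one_eq_prod_range {M : Type*} [CommMonoid M] (f : ℕ → M) (m : ℕ) :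
    ∏ j ∈ Icc 1 m, f j = ∏ k ∈ range m, f (k + 1) := by
  rw [range_eq_Ico, prod_Ico_add', zero_add, Ico_add_one_right_eq_Icc]

namespace IsPrimitiveRoot

variable {R : Type*} [CommRing R] [IsDomain R] {ζ : R} {n : ℕ}

theorem prod_Icc_pow_sub_one_eq_order (hζ : IsPrimitiveRoot ζ (n + 1)) :
    (-1) ^ n * ∏ j ∈ Icc 1 n, (ζ ^ j - 1) = n + 1 := by
  rw [prod_Icc_one_eq_prod_range, hζ.prod_pow_sub_one_eq_order]

theorem prod_geom_sum_pow_eq_one (hζ : IsPrimitiveRoot ζ n) {a : ℕ} (ha : a.Coprime n) :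
    ∏ j ∈ Icc 1 (n - 1), ∑ k ∈ range a, ζ ^ (k * j) = 1 := by
  obtain _ | m := n
  · simp
  have hn : (m + 1 : R) ≠ 0 := by exact_mod_cast hζ.neZero'.out
  have hgeom (j : ℕ) : (ζ ^ a) ^ j - 1 = (∑ k ∈ range a, ζ ^ (k * j)) * (ζ ^ j - 1) := by
    rw [← pow_mul, mul_comm a j, pow_mul, ← geom_sum_mul]
    simp_rw [← pow_mul, mul_comm]
  have key := (hζ.pow_of_coprime a ha).prod_Icc_pow_sub_one_eq_order
  simp only [hgeom, prod_mul_distrib] at key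
  rw [mul_left_comm, hζ.prod_Icc_pow_sub_one_eq_order] at key
  rw [Nat.add_sub_cancel]
  exact mul_right_cancel₀ hn (key.trans (one_mul _).symm)

end IsPrimitiveRoot

theorem Polynomial.cyclotomic_dvd_of_aeval_eq_zero {K : Type*} [Field K] [CharZero K] {μ : K}
    {n : ℕ} (hμ : IsPrimitiveRoot μ n) (hn : 0 < n) {f : ℤ[X]} (hf : aeval μ f = 0) :
    cyclotomic n ℤ ∣ f := by
  rw [cyclotomic_eq_minpoly hμ hn]
  exact minpoly.isIntegrallyClosed_dvd (hμ.isIntegral hn) hf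

theorem q_fermat_little_general (p a : ℕ) (hp : p.Prime) (hpa : ¬ p ∣ a) :
    (∑ i ∈ Finset.range p, (Polynomial.X : Polynomial ℤ) ^ i) ∣
      (∏ j ∈ Finset.Icc 1 (p - 1),
        ∑ k ∈ Finset.range a, (Polynomial.X : Polynomial ℤ) ^ (k * j)) - 1 := by
  have hζ := Complex.isPrimitiveRoot_exp p hp.ne_zero
  have ha : a.Coprime p := (hp.coprime_iff_not_dvd.mpr hpa).symm
  have : Fact p.Prime := ⟨hp⟩
  rw [← cyclotomic_prime ℤ p]
  refine cyclotomic_dvd_of_aeval_eq_zero hζ hp.pos ?_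
  simp only [map_sub, map_one, map_prod, map_sum, map_pow, aeval_X, hζ.prod_geom_sum_pow_eq_one ha,
    sub_self]

/-- q-analogue of Fermat's little theorem: for a prime `p` and positive `a` with `p ∤ a`,
`∏_{j=1}^{p-1} (1 + q^j + ⋯ + q^{(a-1)j}) ≡ 1 (mod [p]_q)` in `ℤ[q]`. -/
theorem q_fermat_little (p a : ℕ) (hp : p.Prime) (ha : 0 < a) (hpa : ¬ p ∣ a) :
    (∑ i ∈ Finset.range p, (Polynomial.X : Polynomial ℤ) ^ i) ∣
      (∏ j ∈ Finset.Icc 1 (p - 1),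
        ∑ k ∈ Finset.range a, (Polynomial.X : Polynomial ℤ) ^ (k * j)) - 1 :=
  q_fermat_little_general p a hp hpa
end

section
/- Let n, a, t be positive integers, and let b = gcd(n, a). If n does not divide tb, then ∑_{d∣n, gcd(d, ta) = gcd(d, t)} μ(n/d) · a^{gcd(d, t)} = 0, where the sum is over positive divisors d of n satisfying gcd(d, ta) = gcd(d, t). -/
open ArithmeticFunction Finset

private lemma gcd_eq_gcd_of_min_eq {t d d' : ℕ} (ht : t ≠ 0) (hd : d ≠ 0) (hd' : d' ≠ 0)
    (h : ∀ q, min (d.factorization q) (t.factorization q)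
        = min (d'.factorization q) (t.factorization q)) :
    Nat.gcd d t = Nat.gcd d' t := by
  have h1 : Nat.gcd d t ≠ 0 := (Nat.gcd_pos_of_pos_right d (Nat.pos_of_ne_zero ht)).ne'
  have h2 : Nat.gcd d' t ≠ 0 := (Nat.gcd_pos_of_pos_right d' (Nat.pos_of_ne_zero ht)).ne'
  refine Nat.factorization_inj h1 h2 ?_
  rw [Nat.factorization_gcd hd ht, Nat.factorization_gcd hd' ht]
  ext q
  simpa using h q

/-- If `n ∤ tb` with `b = gcd(n,a)`, then
`∑_{d∣n, gcd(d,ta)=gcd(d,t)} μ(n/d) a^{gcd(d,t)} = 0`. -/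
theorem moebius_sum_vanishes (n a t : ℕ) (hn : 0 < n) (ha : 0 < a) (ht : 0 < t)
    (hndvd : ¬ n ∣ t * Nat.gcd n a) :
    ∑ d ∈ n.divisors.filter (fun d => Nat.gcd d (t * a) = Nat.gcd d t),
        (moebius (n / d) : ℤ) * (a : ℤ) ^ (Nat.gcd d t) = 0 := by
  have hn0 : n ≠ 0 := hn.ne'
  have ht0 : t ≠ 0 := ht.ne'
  have ha0 : a ≠ 0 := ha.ne'
  have hta0 : t * a ≠ 0 := Nat.mul_ne_zero ht0 ha0
  have hb0 : Nat.gcd n a ≠ 0 := (Nat.gcd_pos_of_pos_left a hn).ne'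
  -- extract a prime `p` with `v_p(t) + v_p(gcd n a) < v_p n`
  rw [← Nat.factorization_le_iff_dvd hn0 (Nat.mul_ne_zero ht0 hb0), Finsupp.le_def] at hndvd
  push_neg at hndvd
  obtain ⟨p, hp⟩ := hndvd
  rw [Nat.factorization_mul ht0 hb0, Finsupp.add_apply,
    Nat.factorization_gcd hn0 ha0, Finsupp.inf_apply] at hp
  set k := n.factorization p with hk
  set s := t.factorization p with hs
  set va := a.factorization p with hva
  have hk1 : 1 ≤ k := by omega
  have hpp : p.Prime := by
    have hmem : p ∈ n.factorization.support := Finsupp.mem_support_iff.2 (by omega)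
    rw [Nat.support_factorization] at hmem
    exact Nat.prime_of_mem_primeFactors hmem
  have hp0 : p ≠ 0 := hpp.pos.ne'
  have hta_fact : (t * a).factorization p = s + va := by
    rw [Nat.factorization_mul ht0 ha0, Finsupp.add_apply, ← hs, ← hva]
  have hmem : ∀ d ∈ n.divisors.filter (fun d => Nat.gcd d (t * a) = Nat.gcd d t),
      d ∣ n ∧ d ≠ 0 ∧ Nat.gcd d (t * a) = Nat.gcd d t := by
    intro d hd
    rw [mem_filter, Nat.mem_divisors] at hd
    exact ⟨hd.1.1, fun h => hn0 (by simpa [h] using hd.1.1), hd.2⟩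
  -- μ(n/d) = 0 when v_p d + 2 ≤ k
  have hmu0 : ∀ d : ℕ, d ∣ n → d ≠ 0 → d.factorization p + 2 ≤ k →
      (moebius (n / d) : ℤ) = 0 := by
    intro d hdn hd0 hle
    have hnd0 : n / d ≠ 0 := (Nat.div_pos (Nat.le_of_dvd hn hdn) (Nat.pos_of_ne_zero hd0)).ne'
    have h2 : 2 ≤ (n / d).factorization p := by
      rw [Nat.factorization_div hdn, Finsupp.tsub_apply]
      omega
    have hsq : ¬ Squarefree (n / d) := by
      intro hsq
      exact hpp.not_isUnit (hsq p (by
        have := (hpp.pow_dvd_iff_le_factorization hnd0).2 h2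
        rwa [pow_two] at this))
    rw [moebius_eq_zero_of_not_squarefree hsq]
  by_cases hpa : va = 0
  · -- Case B: p ∤ a, so s < k ; use an involution toggling the p-part of d.
    have hsk : s + 1 ≤ k := by omega
    have hta_p : (t * a).factorization p = s := by rw [hta_fact, hpa, add_zero]
    have key : ∀ (u d d' : ℕ), u ≠ 0 → d ≠ 0 → d' ≠ 0 →
        u.factorization p = s →
        (∀ q, q ≠ p → d.factorization q = d'.factorization q) →
        s ≤ d.factorization p → s ≤ d'.factorization p →
        Nat.gcd d u = Nat.gcd d' u := by
      intro u d d' hu hd hd' hup hq hds hd's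
      refine gcd_eq_gcd_of_min_eq hu hd hd' ?_
      intro q
      rcases eq_or_ne q p with rfl | hqp
      · rw [hup]; omega
      · rw [hq q hqp]
    -- facts about multiplying by p
    have hfactmul : ∀ c : ℕ, c ≠ 0 →
        ((c * p).factorization p = c.factorization p + 1 ∧
          ∀ q, q ≠ p → (c * p).factorization q = c.factorization q) := by
      intro c hc0
      constructor
      · rw [Nat.factorization_mul hc0 hp0, Finsupp.add_apply, hpp.factorization,
          Finsupp.single_apply, if_pos rfl]
      · intro q hqp
        rw [Nat.factorization_mul hc0 hp0, Finsupp.add_apply, hpp.factorization,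
          Finsupp.single_apply, if_neg (fun h => hqp h.symm), add_zero]
    have hgcds : ∀ c : ℕ, c ≠ 0 → s ≤ c.factorization p →
        Nat.gcd (c * p) t = Nat.gcd c t ∧ Nat.gcd (c * p) (t * a) = Nat.gcd c (t * a) := by
      intro c hc0 hcs
      have hcp0 : c * p ≠ 0 := Nat.mul_ne_zero hc0 hp0
      obtain ⟨h1, h2⟩ := hfactmul c hc0
      constructor
      · exact key t (c * p) c ht0 hcp0 hc0 hs.symm h2 (by omega) hcs
      · exact key (t * a) (c * p) c hta0 hcp0 hc0 hta_p h2 (by omega) hcs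
    -- the cancelling pair
    have pairlem : ∀ c : ℕ, c ≠ 0 → c * p ∣ n → c.factorization p = k - 1 →
        (moebius (n / (c * p)) : ℤ) * (a : ℤ) ^ (Nat.gcd (c * p) t)
          + (moebius (n / c) : ℤ) * (a : ℤ) ^ (Nat.gcd c t) = 0 := by
      intro c hc0 hcpn hcp
      have hcp0 : c * p ≠ 0 := Nat.mul_ne_zero hc0 hp0
      obtain ⟨m, hm⟩ := hcpn
      have hm0 : m ≠ 0 := by rintro rfl; rw [mul_zero] at hm; exact hn0 hm
      have hnc : n / c = p * m := by
        rw [hm, mul_assoc, Nat.mul_div_cancel_left _ (Nat.pos_of_ne_zero hc0)]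
      have hncp : n / (c * p) = m := by
        rw [hm, Nat.mul_div_cancel_left _ (Nat.pos_of_ne_zero hcp0)]
      have hmfact : m.factorization p = 0 := by
        have h1 : n.factorization p = (c * p).factorization p + m.factorization p := by
          rw [hm, Nat.factorization_mul hcp0 hm0, Finsupp.add_apply]
        have h2 := (hfactmul c hc0).1
        omega
      have hpm : ¬ p ∣ m := by
        intro hdvd
        have := (hpp.dvd_iff_one_le_factorization hm0).1 hdvd
        omega
      have hmu : (moebius (p * m) : ℤ) = - moebius m := by
        rw [isMultiplicative_moebius.map_mul_of_coprime
          ((Nat.Prime.coprime_iff_not_dvd hpp).2 hpm), moebius_apply_prime hpp]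
        ring
      have e2 : Nat.gcd (c * p) t = Nat.gcd c t := (hgcds c hc0 (by omega)).1
      rw [hncp, hnc, e2, hmu]
      ring
    refine Finset.sum_involution
      (fun d _ => if d.factorization p = k then d / p
        else if d.factorization p = k - 1 then d * p else d) ?_ ?_ ?_ ?_
    · -- cancellation
      intro d hd
      obtain ⟨hdn, hd0, hcond⟩ := hmem d hd
      have hdk : d.factorization p ≤ k := by
        rw [hk]; exact Finsupp.le_def.1 ((Nat.factorization_le_iff_dvd hd0 hn0).2 hdn) p
      by_cases h1 : d.factorization p = k
      · have hpd : p ∣ d := (hpp.dvd_iff_one_le_factorization hd0).2 (by omega)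
        have hc0 : d / p ≠ 0 :=
          (Nat.div_pos (Nat.le_of_dvd (Nat.pos_of_ne_zero hd0) hpd) hpp.pos).ne'
        have hcm : d / p * p = d := Nat.div_mul_cancel hpd
        have hcfact : (d / p).factorization p = k - 1 := by
          have := (hfactmul (d / p) hc0).1
          rw [hcm] at this
          omega
        simp only [if_pos h1]
        have := pairlem (d / p) hc0 (by rwa [hcm]) hcfact
        rw [hcm] at this
        linarith [this]
      · by_cases h2 : d.factorization p = k - 1
        · simp only [if_neg h1, if_pos h2]
          have hdpn : d * p ∣ n := by
            have hdle := Finsupp.le_def.1 ((Nat.factorization_le_iff_dvd hd0 hn0).2 hdn)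
            rw [← Nat.factorization_le_iff_dvd (Nat.mul_ne_zero hd0 hp0) hn0, Finsupp.le_def]
            intro q
            rcases eq_or_ne q p with rfl | hqp
            · rw [(hfactmul d hd0).1]; omega
            · rw [(hfactmul d hd0).2 q hqp]; exact hdle q
          have := pairlem d hd0 hdpn h2
          linarith [this]
        · simp only [if_neg h1, if_neg h2]
          rw [hmu0 d hdn hd0 (by omega)]
          ring
    · -- g d ≠ d when f d ≠ 0
      intro d hd hfd
      obtain ⟨hdn, hd0, hcond⟩ := hmem d hd
      have hdk : d.factorization p ≤ k := by
        rw [hk]; exact Finsupp.le_def.1 ((Nat.factorization_le_iff_dvd hd0 hn0).2 hdn) p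
      by_cases h1 : d.factorization p = k
      · simp only [if_pos h1]
        exact (Nat.div_lt_self (Nat.pos_of_ne_zero hd0) hpp.one_lt).ne
      · by_cases h2 : d.factorization p = k - 1
        · simp only [if_neg h1, if_pos h2]
          have h2le : d * 2 ≤ d * p := Nat.mul_le_mul_left d hpp.two_le
          have : d < d * p := by
            have := Nat.pos_of_ne_zero hd0
            omega
          exact this.ne'
        · exfalso
          apply hfd
          rw [hmu0 d hdn hd0 (by omega)]
          ring
    · -- g maps into the set
      intro d hd
      obtain ⟨hdn, hd0, hcond⟩ := hmem d hd
      have hdk : d.factorization p ≤ k := by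
        rw [hk]; exact Finsupp.le_def.1 ((Nat.factorization_le_iff_dvd hd0 hn0).2 hdn) p
      by_cases h1 : d.factorization p = k
      · have hpd : p ∣ d := (hpp.dvd_iff_one_le_factorization hd0).2 (by omega)
        have hc0 : d / p ≠ 0 :=
          (Nat.div_pos (Nat.le_of_dvd (Nat.pos_of_ne_zero hd0) hpd) hpp.pos).ne'
        have hcm : d / p * p = d := Nat.div_mul_cancel hpd
        have hcfact : (d / p).factorization p = k - 1 := by
          have := (hfactmul (d / p) hc0).1
          rw [hcm] at this
          omega
        simp only [if_pos h1, mem_filter, Nat.mem_divisors]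
        refine ⟨⟨dvd_trans (Nat.div_dvd_of_dvd hpd) hdn, hn0⟩, ?_⟩
        obtain ⟨e1, e2⟩ := hgcds (d / p) hc0 (by omega)
        rw [hcm] at e1 e2
        rw [← e2, ← e1, hcond]
      · by_cases h2 : d.factorization p = k - 1
        · have hdpn : d * p ∣ n := by
            have hdle := Finsupp.le_def.1 ((Nat.factorization_le_iff_dvd hd0 hn0).2 hdn)
            rw [← Nat.factorization_le_iff_dvd (Nat.mul_ne_zero hd0 hp0) hn0, Finsupp.le_def]
            intro q
            rcases eq_or_ne q p with rfl | hqp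
            · rw [(hfactmul d hd0).1]; omega
            · rw [(hfactmul d hd0).2 q hqp]; exact hdle q
          simp only [if_neg h1, if_pos h2, mem_filter, Nat.mem_divisors]
          refine ⟨⟨hdpn, hn0⟩, ?_⟩
          obtain ⟨e1, e2⟩ := hgcds d hd0 (by omega)
          rw [e2, e1, hcond]
        · simp only [if_neg h1, if_neg h2]
          exact hd
    · -- involution
      intro d hd
      obtain ⟨hdn, hd0, hcond⟩ := hmem d hd
      have hdk : d.factorization p ≤ k := by
        rw [hk]; exact Finsupp.le_def.1 ((Nat.factorization_le_iff_dvd hd0 hn0).2 hdn) p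
      by_cases h1 : d.factorization p = k
      · have hpd : p ∣ d := (hpp.dvd_iff_one_le_factorization hd0).2 (by omega)
        have hc0 : d / p ≠ 0 :=
          (Nat.div_pos (Nat.le_of_dvd (Nat.pos_of_ne_zero hd0) hpd) hpp.pos).ne'
        have hcm : d / p * p = d := Nat.div_mul_cancel hpd
        have hcfact : (d / p).factorization p = k - 1 := by
          have := (hfactmul (d / p) hc0).1
          rw [hcm] at this
          omega
        simp only [if_pos h1, hcfact, if_neg (by omega : ¬ (k - 1 = k)), if_pos rfl]
        exact hcm
      · by_cases h2 : d.factorization p = k - 1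
        · have hdpfact : (d * p).factorization p = k := by
            have := (hfactmul d hd0).1
            omega
          simp only [if_neg h1, if_pos h2, hdpfact, if_pos rfl]
          exact Nat.mul_div_cancel d hpp.pos
        · simp only [if_neg h1, if_neg h2]
  · -- Case A: p ∣ a ; every term vanishes.
    have hva1 : 1 ≤ va := Nat.pos_of_ne_zero hpa
    apply Finset.sum_eq_zero
    intro d hd
    obtain ⟨hdn, hd0, hcond⟩ := hmem d hd
    have hvd : d.factorization p ≤ s := by
      by_contra hlt
      push_neg at hlt
      have h1 : (Nat.gcd d (t * a)).factorization p = min (d.factorization p) (s + va) := by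
        rw [Nat.factorization_gcd hd0 hta0, Finsupp.inf_apply, hta_fact]
      have h2 : (Nat.gcd d t).factorization p = min (d.factorization p) s := by
        rw [Nat.factorization_gcd hd0 ht0, Finsupp.inf_apply, ← hs]
      rw [hcond, h2] at h1
      omega
    rw [hmu0 d hdn hd0 (by omega)]
    ring
end

section
/- Let n and a be positive integers, b = gcd(n, a), and let F(q) = ∑_{d∣n} μ(d) · ∏_{j=1}^{n/d} (1 + q^{jd} + q^{2jd} + ⋯ + q^{(a−1)jd}) ∈ ℤ[q]. If s is an integer with 1 ≤ s ≤ nb and b does not divide s, then F(ζ_{nb}^s) = 0, where ζ_{nb} = e^{2πi/(nb)}. -/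
open Polynomial ArithmeticFunction Finset Complex

/-!
For every divisor `d` of `n`, the factor `j = n / d` of the `d`-th product is
`1 + q^n + ⋯ + q^{(a-1)n}`, a geometric sum in `q^n`. At `q = ζ_{nb}^s` the ratio
`q^n = ζ_b^s` is an `a`-th root of unity (as `b ∣ a`) different from `1` (as `b ∤ s`),
so this factor, and with it every summand of `F`, vanishes.
-/

theorem geom_sum_eq_zero_of_pow_eq_one {R : Type*} [Ring R] [NoZeroDivisors R] {x : R} {a : ℕ}
    (hxa : x ^ a = 1) (hx : x ≠ 1) : ∑ k ∈ range a, x ^ k = 0 := by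
  have h := geom_sum_mul x a
  rw [hxa, sub_self] at h
  exact (mul_eq_zero.mp h).resolve_right (sub_ne_zero.mpr hx)

section Evaluation

variable {R : Type*} [CommRing R] [IsDomain R] {x : R} {n a : ℕ}

theorem aeval_prod_geom_sum_X_pow_eq_zero {d : ℕ} (hd : d ∈ n.divisors)
    (hxa : (x ^ n) ^ a = 1) (hx : x ^ n ≠ 1) :
    aeval x (∏ j ∈ Icc 1 (n / d), ∑ k ∈ range a, (X : ℤ[X]) ^ (k * j * d)) = 0 := by
  obtain ⟨hdn, hn⟩ := Nat.mem_divisors.mp hd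
  have hj : n / d ∈ Icc 1 (n / d) :=
    mem_Icc.mpr ⟨Nat.div_pos (Nat.le_of_dvd (Nat.pos_of_ne_zero hn) hdn)
      (Nat.pos_of_mem_divisors hd), le_rfl⟩
  rw [map_prod]
  refine prod_eq_zero hj ?_
  have hterm : ∀ k : ℕ, aeval x ((X : ℤ[X]) ^ (k * (n / d) * d)) = (x ^ n) ^ k := fun k => by
    rw [map_pow, aeval_X, mul_assoc, Nat.div_mul_cancel hdn, ← pow_mul, mul_comm]
  simp only [map_sum, hterm]
  exact geom_sum_eq_zero_of_pow_eq_one hxa hx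

theorem aeval_moebius_sum_prod_geom_sum_eq_zero (hxa : (x ^ n) ^ a = 1) (hx : x ^ n ≠ 1) :
    aeval x (∑ d ∈ n.divisors, C (moebius d : ℤ) *
      ∏ j ∈ Icc 1 (n / d), ∑ k ∈ range a, (X : ℤ[X]) ^ (k * j * d)) = 0 := by
  rw [map_sum]
  refine sum_eq_zero fun d hd => ?_
  rw [map_mul, aeval_prod_geom_sum_X_pow_eq_zero hd hxa hx, mul_zero]

end Evaluation

theorem F_vanishes_at_nondiv_general (n a : ℕ) (hn : 0 < n)
    (s : ℕ) (hbs : ¬ Nat.gcd n a ∣ s) :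
    Polynomial.aeval (Complex.exp (2 * Real.pi * Complex.I / (n * Nat.gcd n a)) ^ s)
      (∑ d ∈ n.divisors, Polynomial.C ((moebius d : ℤ)) *
        ∏ j ∈ Finset.Icc 1 (n / d),
          ∑ k ∈ Finset.range a, (Polynomial.X : Polynomial ℤ) ^ (k * j * d)) = 0 := by
  set b := Nat.gcd n a
  have hb : b ≠ 0 := (Nat.gcd_pos_of_pos_left a hn).ne'
  have hζ : IsPrimitiveRoot (exp (2 * Real.pi * I / (n * b))) (n * b) := by
    exact_mod_cast isPrimitiveRoot_exp (n * b) (Nat.mul_ne_zero hn.ne' hb)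
  have hζn : IsPrimitiveRoot (exp (2 * Real.pi * I / (n * b)) ^ n) b := hζ.pow (by positivity) rfl
  apply aeval_moebius_sum_prod_geom_sum_eq_zero
  · rw [pow_right_comm _ s n, ← pow_mul, hζn.pow_eq_one_iff_dvd]
    exact (Nat.gcd_dvd_right n a).mul_left s
  · rw [pow_right_comm _ s n, Ne, hζn.pow_eq_one_iff_dvd]
    exact hbs

/-- Let `F(q) = ∑_{d∣n} μ(d) ∏_{j=1}^{n/d} (1 + q^{jd} + ⋯ + q^{(a−1)jd}) ∈ ℤ[q]` and
`b = gcd(n,a)`. If `1 ≤ s ≤ nb` and `b ∤ s`, then `F(ζ_{nb}^s) = 0`. -/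
theorem F_vanishes_at_nondiv (n a : ℕ) (hn : 0 < n) (ha : 0 < a)
    (s : ℕ) (hs1 : 1 ≤ s) (hs2 : s ≤ n * Nat.gcd n a) (hbs : ¬ Nat.gcd n a ∣ s) :
    Polynomial.aeval (Complex.exp (2 * Real.pi * Complex.I / (n * Nat.gcd n a)) ^ s)
      (∑ d ∈ n.divisors, Polynomial.C ((moebius d : ℤ)) *
        ∏ j ∈ Finset.Icc 1 (n / d),
          ∑ k ∈ Finset.range a, (Polynomial.X : Polynomial ℤ) ^ (k * j * d)) = 0 :=
  F_vanishes_at_nondiv_general n a hn s hbs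
end
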